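/- arXiv:2511.05258 — 4 statements merged into one kernel-verified Lean document; each statement's English description precedes it below -/
import Mathlib

section
/- Let x ∈ ℂⁿ and let B, C be complex n×n positive-semidefinite matrices with B + C = x xᴴ. Then there exist real numbers α, β ≥ 0 with α + β = 1 such that B = α • (x xᴴ) and C = β • (x xᴴ). In other words, any decomposition of a rank-one positive-semidefinite matrix into a sum of two positive-semidefinite matrices consists of scalar multiples of that matrix. -/
/-!
If `B + C = x xᴴ` with `B, C` positive semidefinite and `v ⊥ x`, then `vᴴBv + vᴴCv = 0`, so
`Bv = Cv = 0`. A matrix `M` killing `x^⊥` satisfies `‖x‖² M = (Mx) xᴴ` (test it on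
`‖x‖² v - (xᴴv) x`); if `M` is Hermitian, taking adjoints gives `Mx ∥ x`, so `M` is a multiple
of `x xᴴ`, nonnegative because `xᴴMx ≥ 0`. Comparing `B + C = x xᴴ` gives `α + β = 1`.
-/

open Matrix
open scoped ComplexOrder

namespace Matrix

variable {n R 𝕜 : Type*} [Fintype n]

theorem smul_eq_vecMulVec_mulVec_of_mulVec_eq_zero [CommRing R] {M : Matrix n n R} {x y : n → R}
    (hM : ∀ v, y ⬝ᵥ v = 0 → M *ᵥ v = 0) : (y ⬝ᵥ x) • M = vecMulVec (M *ᵥ x) y := by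
  refine ext_iff_mulVec.mpr fun v => ?_
  have hw := hM ((y ⬝ᵥ x) • v - (y ⬝ᵥ v) • x) (by
    simp only [dotProduct_sub, dotProduct_smul, smul_eq_mul, mul_comm, sub_self])
  rw [mulVec_sub, mulVec_smul, mulVec_smul, sub_eq_zero] at hw
  rw [smul_mulVec, vecMulVec_mulVec, op_smul_eq_smul, hw]

variable [RCLike 𝕜]

theorem IsHermitian.smul_mulVec_eq_of_mulVec_eq_zero {M : Matrix n n 𝕜} (hM : M.IsHermitian)
    {x : n → 𝕜} (hx : ∀ v, star x ⬝ᵥ v = 0 → M *ᵥ v = 0) :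
    (star x ⬝ᵥ x) • (M *ᵥ x) = (star x ⬝ᵥ M *ᵥ x) • x := by
  have hstar := congrArg (·ᴴ) (smul_eq_vecMulVec_mulVec_of_mulVec_eq_zero (x := x) hx)
  rw [conjTranspose_smul, hM.eq, conjTranspose_vecMulVec, star_star, star_dotProduct,
    star_star] at hstar
  rw [← smul_mulVec, hstar, vecMulVec_mulVec, op_smul_eq_smul, star_mulVec, hM.eq,
    dotProduct_mulVec]

theorem PosSemidef.exists_eq_smul_vecMulVec_of_mulVec_eq_zero {M : Matrix n n 𝕜}
    (hM : M.PosSemidef) {x : n → 𝕜} (hx : ∀ v, star x ⬝ᵥ v = 0 → M *ᵥ v = 0) :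
    ∃ α : ℝ, 0 ≤ α ∧ M = α • vecMulVec x (star x) := by
  by_cases hx0 : x = 0
  · subst hx0
    refine ⟨0, le_rfl, ext_iff_mulVec.mpr fun v => ?_⟩
    simpa using hx v (by simp)
  set s := star x ⬝ᵥ x
  set c := star x ⬝ᵥ M *ᵥ x
  have hs : s ≠ 0 := by simpa [s, dotProduct_star_self_eq_zero] using hx0
  have hsq : s ^ 2 • M = c • vecMulVec x (star x) := calc
    s ^ 2 • M = s • (s • M) := by rw [pow_two, mul_smul]
    _ = s • vecMulVec (M *ᵥ x) (star x) := by rw [smul_eq_vecMulVec_mulVec_of_mulVec_eq_zero hx]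
    _ = vecMulVec (s • (M *ᵥ x)) (star x) := (smul_vecMulVec ..).symm
    _ = c • vecMulVec x (star x) := by
      rw [hM.isHermitian.smul_mulVec_eq_of_mulVec_eq_zero hx, smul_vecMulVec]
  obtain ⟨α, hα, hαc⟩ := RCLike.nonneg_iff_exists_ofReal.mp
    (div_nonneg (hM.dotProduct_mulVec_nonneg x) (pow_nonneg (dotProduct_star_self_nonneg x) 2))
  refine ⟨α, hα, ?_⟩
  rw [RCLike.real_smul_eq_coe_smul (K := 𝕜), hαc, div_eq_inv_mul, mul_smul, ← hsq, smul_smul,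
    inv_mul_cancel₀ (pow_ne_zero 2 hs), one_smul]

theorem PosSemidef.mulVec_eq_zero_of_dotProduct_add_mulVec_eq_zero {B C : Matrix n n 𝕜}
    (hB : B.PosSemidef) (hC : C.PosSemidef) {v : n → 𝕜}
    (hv : star v ⬝ᵥ (B + C) *ᵥ v = 0) : B *ᵥ v = 0 := by
  rw [add_mulVec, dotProduct_add] at hv
  exact (hB.dotProduct_mulVec_zero_iff v).mp ((add_eq_zero_iff_of_nonneg
    (hB.dotProduct_mulVec_nonneg v) (hC.dotProduct_mulVec_nonneg v)).mp hv).1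

theorem PosSemidef.exists_eq_smul_of_add_eq_vecMulVec {B C : Matrix n n 𝕜}
    (hB : B.PosSemidef) (hC : C.PosSemidef) {x : n → 𝕜} (h : B + C = vecMulVec x (star x)) :
    ∃ α : ℝ, 0 ≤ α ∧ B = α • vecMulVec x (star x) :=
  hB.exists_eq_smul_vecMulVec_of_mulVec_eq_zero fun v hv =>
    hB.mulVec_eq_zero_of_dotProduct_add_mulVec_eq_zero hC <| by
      rw [h, vecMulVec_mulVec, hv, MulOpposite.op_zero, zero_smul, dotProduct_zero]

end Matrix

/-- Any decomposition of a rank-one PSD matrix `x xᴴ` as a sum of two PSD matrices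
consists of nonnegative scalar multiples of `x xᴴ`. -/
theorem rank_one_psd_decomposition (n : ℕ) (x : Fin n → ℂ)
    (B C : Matrix (Fin n) (Fin n) ℂ)
    (hB : B.PosSemidef) (hC : C.PosSemidef)
    (h : B + C = Matrix.vecMulVec x (star x)) :
    ∃ α β : ℝ, 0 ≤ α ∧ 0 ≤ β ∧ α + β = 1 ∧
      B = α • Matrix.vecMulVec x (star x) ∧
      C = β • Matrix.vecMulVec x (star x) := by
  obtain ⟨α, hα, hBα⟩ := hB.exists_eq_smul_of_add_eq_vecMulVec hC h
  obtain ⟨β, hβ, hCβ⟩ := hC.exists_eq_smul_of_add_eq_vecMulVec hB ((add_comm C B).trans h)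
  by_cases hx : x = 0
  · subst hx
    exact ⟨1, 0, zero_le_one, le_rfl, add_zero 1, by simp_all, by simp_all⟩
  refine ⟨α, β, hα, hβ, ?_, hBα, hCβ⟩
  have hP : vecMulVec x (star x) ≠ 0 := vecMulVec_ne_zero hx (star_ne_zero.mpr hx)
  exact smul_left_injective ℝ hP (by dsimp only; rw [add_smul, ← hBα, ← hCβ, h, one_smul])
end

section
/- Let d₁, d₂ be positive integers, x ∈ ℂ^{d₁}, z ∈ ℂ^{d₂}, and suppose (x xᴴ) ⊗ (z zᴴ) = B + C, where each of B and C is a finite sum of matrices of the form (u uᴴ) ⊗ (w wᴴ) with u ∈ ℂ^{d₁}, w ∈ ℂ^{d₂}. Then there exist real numbers α, β ≥ 0 with α + β = 1 such that B = α • ((x xᴴ) ⊗ (z zᴴ)) and C = β • ((x xᴴ) ⊗ (z zᴴ)). Hence every nonzero rank-one product matrix (x xᴴ) ⊗ (z zᴴ) spans an extreme ray of the bipartite PSD tensor cone. -/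
open Matrix Kronecker

/-- Membership in the bipartite PSD tensor cone: `M` is a finite sum of Kronecker products
of rank-one PSD matrices. -/
def InBipartitePSDCone {d₁ d₂ : ℕ} (M : Matrix (Fin d₁ × Fin d₂) (Fin d₁ × Fin d₂) ℂ) : Prop :=
  ∃ (r : ℕ) (u : Fin r → Fin d₁ → ℂ) (w : Fin r → Fin d₂ → ℂ),
    M = ∑ i, (Matrix.vecMulVec (u i) (star (u i))) ⊗ₖ (Matrix.vecMulVec (w i) (star (w i)))

/-!
Reshaped, `(x xᴴ) ⊗ (z zᴴ)` is `v vᴴ` for `v = x ⊗ z`, and each summand of `B` and `C` is some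
`u uᴴ`. If `v vᴴ = ∑ uᵢ uᵢᴴ`, evaluating the quadratic form at any `y ⊥ v` gives
`0 = |vᴴ y|² = ∑ |uᵢᴴ y|²`, so every `uᵢ` annihilates `v^⊥` and is therefore a multiple `cᵢ v`.
Hence `B` and `C` are the multiples `∑ |cᵢ|²` of `v vᴴ`, and the two coefficients add up to `1`
unless `v vᴴ = 0`.
-/

namespace Matrix

theorem vecMulVec_kronecker_vecMulVec {R l m n p : Type*} [CommSemiring R] (a : l → R)
    (b : m → R) (c : n → R) (d : p → R) :
    vecMulVec a b ⊗ₖ vecMulVec c d =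
      vecMulVec (fun q : l × n => a q.1 * c q.2) (fun q : m × p => b q.1 * d q.2) := by
  ext ⟨i, j⟩ ⟨k, l⟩
  simp only [kroneckerMap_apply, vecMulVec_apply]
  ring

theorem kronecker_vecMulVec_self_star {R m n : Type*} [CommSemiring R] [StarRing R]
    (x : m → R) (z : n → R) :
    vecMulVec x (star x) ⊗ₖ vecMulVec z (star z) =
      vecMulVec (fun q : m × n => x q.1 * z q.2) (star fun q : m × n => x q.1 * z q.2) := by
  rw [vecMulVec_kronecker_vecMulVec]
  congr 1
  ext q
  exact (star_mul' _ _).symm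

theorem exists_smul_eq_of_forall_dotProduct_eq_zero {K n : Type*} [Field K] [Fintype n]
    [DecidableEq n] {a b : n → K} (h : ∀ y, a ⬝ᵥ y = 0 → b ⬝ᵥ y = 0) : ∃ c : K, b = c • a := by
  have hker : ⨅ _ : Unit, LinearMap.ker (dotProductEquiv K n a) ≤
      LinearMap.ker (dotProductEquiv K n b) := fun y hy => by
    simpa using h y (by simpa using hy)
  obtain ⟨c, hc⟩ := Submodule.mem_span_singleton.mp
    (by simpa using mem_span_of_iInf_ker_le_ker hker)
  exact ⟨c, (dotProductEquiv K n).injective (by simpa using hc.symm)⟩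

section RCLike

variable {𝕜 n : Type*} [RCLike 𝕜]

theorem vecMulVec_smul_self_star (c : 𝕜) (v : n → 𝕜) :
    vecMulVec (c • v) (star (c • v)) = (‖c‖ ^ 2 : ℝ) • vecMulVec v (star v) := by
  ext k l
  simp only [vecMulVec_apply, Pi.smul_apply, Pi.star_apply, smul_eq_mul, star_mul',
    Matrix.smul_apply, RCLike.real_smul_eq_coe_mul, RCLike.ofReal_pow, ← RCLike.mul_conj,
    RCLike.star_def]
  ring

variable [Fintype n]

theorem star_dotProduct_vecMulVec_self_star_mulVec (u y : n → 𝕜) :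
    star y ⬝ᵥ (vecMulVec u (star u) *ᵥ y) = ((‖star u ⬝ᵥ y‖ ^ 2 : ℝ) : 𝕜) := by
  rw [vecMulVec_mulVec, RCLike.ofReal_pow, ← RCLike.mul_conj, dotProduct_smul, star_dotProduct]
  simp [mul_comm]

variable {ι : Type*} [Fintype ι] {v : n → 𝕜} {u : ι → n → 𝕜}

theorem dotProduct_eq_zero_of_vecMulVec_eq_sum
    (h : vecMulVec v (star v) = ∑ i, vecMulVec (u i) (star (u i)))
    {y : n → 𝕜} (hy : star v ⬝ᵥ y = 0) (i : ι) : star (u i) ⬝ᵥ y = 0 := by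
  have hquad : ‖star v ⬝ᵥ y‖ ^ 2 = ∑ i, ‖star (u i) ⬝ᵥ y‖ ^ 2 := by
    have := congrArg (fun M => star y ⬝ᵥ (M *ᵥ y)) h
    simp only [sum_mulVec, dotProduct_sum, star_dotProduct_vecMulVec_self_star_mulVec] at this
    exact_mod_cast this
  rw [hy, norm_zero, zero_pow two_ne_zero, eq_comm,
    Finset.sum_eq_zero_iff_of_nonneg fun _ _ => by positivity] at hquad
  simpa using hquad i (Finset.mem_univ i)

theorem exists_smul_eq_of_vecMulVec_eq_sum [DecidableEq n]
    (h : vecMulVec v (star v) = ∑ i, vecMulVec (u i) (star (u i))) (i : ι) :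
    ∃ c : 𝕜, u i = c • v := by
  obtain ⟨c, hc⟩ := exists_smul_eq_of_forall_dotProduct_eq_zero
    fun _ hy => dotProduct_eq_zero_of_vecMulVec_eq_sum h hy i
  exact ⟨star c, by simpa using congrArg star hc⟩

theorem exists_nonneg_smul_eq_of_vecMulVec_eq_sum_add [DecidableEq n] {κ : Type*} [Fintype κ]
    {w : κ → n → 𝕜} (h : vecMulVec v (star v) =
      ∑ i, vecMulVec (u i) (star (u i)) + ∑ j, vecMulVec (w j) (star (w j))) :
    ∃ t : ℝ, 0 ≤ t ∧ ∑ i, vecMulVec (u i) (star (u i)) = t • vecMulVec v (star v) := by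
  have h' : vecMulVec v (star v) =
      ∑ k, vecMulVec (Sum.elim u w k) (star (Sum.elim u w k)) := by
    rwa [Fintype.sum_sum_type]
  choose c hc using exists_smul_eq_of_vecMulVec_eq_sum h'
  refine ⟨∑ i, ‖c (.inl i)‖ ^ 2, by positivity, ?_⟩
  simp only [Finset.sum_smul, ← vecMulVec_smul_self_star, ← hc, Sum.elim_inl]

end RCLike

end Matrix

theorem InBipartitePSDCone.exists_eq_sum_vecMulVec {d₁ d₂ : ℕ}
    {M : Matrix (Fin d₁ × Fin d₂) (Fin d₁ × Fin d₂) ℂ} (hM : InBipartitePSDCone M) :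
    ∃ (r : ℕ) (u : Fin r → Fin d₁ × Fin d₂ → ℂ), M = ∑ i, vecMulVec (u i) (star (u i)) := by
  obtain ⟨r, u, w, rfl⟩ := hM
  exact ⟨r, fun i q => u i q.1 * w i q.2,
    Finset.sum_congr rfl fun i _ => kronecker_vecMulVec_self_star (u i) (w i)⟩

theorem rank_one_product_extreme_ray_general (d₁ d₂ : ℕ)
    (x : Fin d₁ → ℂ) (z : Fin d₂ → ℂ)
    (B C : Matrix (Fin d₁ × Fin d₂) (Fin d₁ × Fin d₂) ℂ)
    (hB : InBipartitePSDCone B) (hC : InBipartitePSDCone C)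
    (h : (Matrix.vecMulVec x (star x)) ⊗ₖ (Matrix.vecMulVec z (star z)) = B + C) :
    ∃ α β : ℝ, 0 ≤ α ∧ 0 ≤ β ∧ α + β = 1 ∧
      B = α • ((Matrix.vecMulVec x (star x)) ⊗ₖ (Matrix.vecMulVec z (star z))) ∧
      C = β • ((Matrix.vecMulVec x (star x)) ⊗ₖ (Matrix.vecMulVec z (star z))) := by
  obtain ⟨rB, uB, rfl⟩ := hB.exists_eq_sum_vecMulVec
  obtain ⟨rC, uC, rfl⟩ := hC.exists_eq_sum_vecMulVec
  rw [kronecker_vecMulVec_self_star] at h ⊢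
  generalize (fun q : Fin d₁ × Fin d₂ => x q.1 * z q.2) = v at h ⊢
  obtain ⟨α, hα, hBα⟩ := exists_nonneg_smul_eq_of_vecMulVec_eq_sum_add h
  obtain ⟨β, hβ, hCβ⟩ := exists_nonneg_smul_eq_of_vecMulVec_eq_sum_add (h.trans (add_comm _ _))
  rw [hBα, hCβ, ← add_smul] at h
  by_cases hv : vecMulVec v (star v) = 0
  · exact ⟨1, 0, zero_le_one, le_rfl, add_zero 1, by simp [hBα, hv], by simp [hCβ, hv]⟩
  · exact ⟨α, β, hα, hβ, smul_left_injective ℝ hv (by simpa using h.symm), hBα, hCβ⟩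

/-- If a rank-one product matrix `(x xᴴ) ⊗ (z zᴴ)` decomposes as a sum of two elements of the
bipartite PSD tensor cone, the two summands are nonnegative scalar multiples of it: rank-one
product matrices span extreme rays of the cone. -/
theorem rank_one_product_extreme_ray (d₁ d₂ : ℕ) (hd₁ : 0 < d₁) (hd₂ : 0 < d₂)
    (x : Fin d₁ → ℂ) (z : Fin d₂ → ℂ)
    (B C : Matrix (Fin d₁ × Fin d₂) (Fin d₁ × Fin d₂) ℂ)
    (hB : InBipartitePSDCone B) (hC : InBipartitePSDCone C)
    (h : (Matrix.vecMulVec x (star x)) ⊗ₖ (Matrix.vecMulVec z (star z)) = B + C) :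
    ∃ α β : ℝ, 0 ≤ α ∧ 0 ≤ β ∧ α + β = 1 ∧
      B = α • ((Matrix.vecMulVec x (star x)) ⊗ₖ (Matrix.vecMulVec z (star z))) ∧
      C = β • ((Matrix.vecMulVec x (star x)) ⊗ₖ (Matrix.vecMulVec z (star z))) :=
  rank_one_product_extreme_ray_general d₁ d₂ x z B C hB hC h
end

section
/- Let d₁ ≥ 2 and d₂ ≥ 2. Then there exists a Hermitian complex (d₁d₂)×(d₁d₂) matrix W such that Re tr(W · ((x xᴴ) ⊗ (z zᴴ))) ≥ 0 for all vectors x ∈ ℂ^{d₁} and z ∈ ℂ^{d₂}, yet W does not belong to the bipartite PSD tensor cone. Hence for bipartite systems the dual cone of the PSD tensor cone strictly contains the PSD tensor cone itself (the cone is not self-dual). -/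
open Matrix Kronecker

/-!
The witness is the partial transpose `W` of `ψ ψᴴ`, where `ψ = e₀ ⊗ e₀ + e₁ ⊗ e₁`.
Partial transposition turns `A ⊗ B` into `A ⊗ Bᵀ` under the trace pairing, and `Bᵀ` is PSD
whenever `B` is, so `W` pairs with product matrices as the PSD matrix `ψ ψᴴ` does, i.e.
nonnegatively. On the other hand every element of the cone is PSD, while the quadratic form
of `W` at `e₀ ⊗ e₁ - e₁ ⊗ e₀` equals `-2`.
-/

open scoped ComplexOrder

namespace Matrix

variable {m n R 𝕜 : Type*}

def partialTranspose (M : Matrix (m × n) (m × n) R) : Matrix (m × n) (m × n) R :=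
  of fun p q => M (p.1, q.2) (q.1, p.2)

theorem conjTranspose_partialTranspose [Star R] (M : Matrix (m × n) (m × n) R) :
    (partialTranspose M)ᴴ = partialTranspose Mᴴ :=
  rfl

theorem IsHermitian.partialTranspose [Star R] {M : Matrix (m × n) (m × n) R}
    (hM : M.IsHermitian) : (partialTranspose M).IsHermitian := by
  rw [IsHermitian, conjTranspose_partialTranspose, hM]

variable [Fintype m] [Fintype n]

theorem trace_partialTranspose_mul_kronecker [CommSemiring R] (M : Matrix (m × n) (m × n) R)
    (A : Matrix m m R) (B : Matrix n n R) :
    trace (partialTranspose M * (A ⊗ₖ B)) = trace (M * (A ⊗ₖ Bᵀ)) := by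
  simp only [trace, diag, mul_apply, partialTranspose, of_apply, kroneckerMap_apply,
    transpose_apply, ← Finset.sum_product']
  exact Fintype.sum_equiv (Function.Involutive.toPerm
    (fun x => ((x.1.1, x.2.2), (x.2.1, x.1.2))) fun _ => rfl) _ _ fun _ => rfl

theorem trace_vecMulVec_star_mul [CommSemiring R] [StarRing R] (v : m → R)
    (P : Matrix m m R) : trace (vecMulVec v (star v) * P) = star v ⬝ᵥ (P *ᵥ v) := by
  rw [vecMulVec_mul, trace_vecMulVec, dotProduct_comm, dotProduct_mulVec]

theorem PosSemidef.trace_vecMulVec_star_mul_nonneg [RCLike 𝕜] {P : Matrix m m 𝕜}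
    (hP : P.PosSemidef) (v : m → 𝕜) : 0 ≤ trace (vecMulVec v (star v) * P) := by
  rw [trace_vecMulVec_star_mul]
  exact hP.dotProduct_mulVec_nonneg v

theorem trace_partialTranspose_vecMulVec_star_mul_kronecker_nonneg [RCLike 𝕜]
    (v : m × n → 𝕜) {A : Matrix m m 𝕜} {B : Matrix n n 𝕜} (hA : A.PosSemidef)
    (hB : B.PosSemidef) :
    0 ≤ trace (partialTranspose (vecMulVec v (star v)) * (A ⊗ₖ B)) := by
  rw [trace_partialTranspose_mul_kronecker]
  exact (hA.kronecker hB.transpose).trace_vecMulVec_star_mul_nonneg v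

theorem not_posSemidef_partialTranspose_vecMulVec_single_add_single [RCLike 𝕜]
    [DecidableEq m] [DecidableEq n] {a a' : m} {b b' : n} (ha : a ≠ a') (hb : b ≠ b') :
    ¬ (partialTranspose (vecMulVec (Pi.single (a, b) 1 + Pi.single (a', b') 1)
        (star (Pi.single (a, b) 1 + Pi.single (a', b') 1 : m × n → 𝕜)))).PosSemidef := by
  intro hW
  set v : m × n → 𝕜 := Pi.single (a, b') 1 - Pi.single (a', b) 1
  have hform : star v ⬝ᵥ (partialTranspose (vecMulVec (Pi.single (a, b) 1 +
      Pi.single (a', b') 1) (star (Pi.single (a, b) 1 + Pi.single (a', b') 1))) *ᵥ v) = -2 := by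
    simp only [v, star_sub, Pi.star_single, star_one, partialTranspose, star_add,
      vecMulVec_apply, Pi.add_apply, Pi.single_apply, Prod.mk.injEq, mulVec_sub, mulVec_single,
      MulOpposite.op_one, one_smul, dotProduct_sub, sub_dotProduct, single_dotProduct, col_apply,
      of_apply, ha, ha.symm, hb, hb.symm, and_true, and_false, and_self, ↓reduceIte, add_zero,
      zero_add, mul_zero, mul_one, sub_zero, zero_sub]
    norm_num
  have := hW.dotProduct_mulVec_nonneg v
  rw [hform] at this
  norm_num at this

end Matrix

theorem InBipartitePSDCone.posSemidef {d₁ d₂ : ℕ}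
    {M : Matrix (Fin d₁ × Fin d₂) (Fin d₁ × Fin d₂) ℂ} (hM : InBipartitePSDCone M) :
    M.PosSemidef := by
  obtain ⟨r, u, w, rfl⟩ := hM
  exact posSemidef_sum _ fun i _ =>
    (posSemidef_vecMulVec_self_star (u i)).kronecker (posSemidef_vecMulVec_self_star (w i))

/-- For bipartite systems with both local dimensions at least 2, there is a Hermitian matrix
pairing nonnegatively with all rank-one product matrices (hence lying in the dual cone of
the bipartite PSD tensor cone) that is not itself in the cone: the cone is not self-dual. -/
theorem bipartite_psd_cone_not_self_dual (d₁ d₂ : ℕ) (h₁ : 2 ≤ d₁) (h₂ : 2 ≤ d₂) :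
    ∃ W : Matrix (Fin d₁ × Fin d₂) (Fin d₁ × Fin d₂) ℂ, W.IsHermitian ∧
      (∀ (x : Fin d₁ → ℂ) (z : Fin d₂ → ℂ),
        0 ≤ ((W * ((Matrix.vecMulVec x (star x)) ⊗ₖ
          (Matrix.vecMulVec z (star z)))).trace).re) ∧
      ¬ InBipartitePSDCone W := by
  set a₀ : Fin d₁ := ⟨0, by omega⟩
  set a₁ : Fin d₁ := ⟨1, by omega⟩
  set b₀ : Fin d₂ := ⟨0, by omega⟩
  set b₁ : Fin d₂ := ⟨1, by omega⟩
  set ψ : Fin d₁ × Fin d₂ → ℂ := Pi.single (a₀, b₀) 1 + Pi.single (a₁, b₁) 1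
  refine ⟨partialTranspose (vecMulVec ψ (star ψ)),
    (posSemidef_vecMulVec_self_star ψ).isHermitian.partialTranspose, fun x z => ?_,
    fun hW => ?_⟩
  · exact (Complex.nonneg_iff.mp (trace_partialTranspose_vecMulVec_star_mul_kronecker_nonneg ψ
      (posSemidef_vecMulVec_self_star x) (posSemidef_vecMulVec_self_star z))).1
  · exact not_posSemidef_partialTranspose_vecMulVec_single_add_single
      (show a₀ ≠ a₁ by simp [a₀, a₁]) (show b₀ ≠ b₁ by simp [b₀, b₁]) hW.posSemidef
end

section
/- Let Z_A be a complex n×n density matrix and Z_B a complex m×m density matrix, and let Z = Z_A ⊗ Z_B be their Kronecker product. Then the following three tensor McCormick matrix inequalities hold: (I ⊗ Z_B) − Z is positive semidefinite, (Z_A ⊗ I) − Z is positive semidefinite, and Z − (I ⊗ Z_B) − (Z_A ⊗ I) + I is positive semidefinite, where the identity matrices I are of the appropriate sizes (n×n, m×m, or nm×nm). -/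
/-!
The three matrices factor as `(1 - Z_A) ⊗ Z_B`, `Z_A ⊗ (1 - Z_B)` and `(1 - Z_A) ⊗ (1 - Z_B)`.
A Kronecker product of positive semidefinite matrices is positive semidefinite, and so is
`1 - ρ` for a density matrix `ρ`, because every eigenvalue of `ρ` is at most their sum, the trace.
-/

open Matrix Kronecker
open scoped ComplexOrder

namespace Matrix

section Kronecker

variable {α l m n p : Type*} [NonUnitalNonAssocRing α]

theorem sub_kronecker (A₁ A₂ : Matrix l m α) (B : Matrix n p α) :
    (A₁ - A₂) ⊗ₖ B = A₁ ⊗ₖ B - A₂ ⊗ₖ B := by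
  rw [eq_sub_iff_add_eq, ← add_kronecker, sub_add_cancel]

theorem kronecker_sub (A : Matrix l m α) (B₁ B₂ : Matrix n p α) :
    A ⊗ₖ (B₁ - B₂) = A ⊗ₖ B₁ - A ⊗ₖ B₂ := by
  rw [eq_sub_iff_add_eq, ← kronecker_add, sub_add_cancel]

end Kronecker

section TraceBound

variable {𝕜 n : Type*} [RCLike 𝕜] [Fintype n] [DecidableEq n] {A : Matrix n n 𝕜}

theorem PosSemidef.eigenvalues_le_re_trace (hA : A.PosSemidef) (i : n) :
    hA.isHermitian.eigenvalues i ≤ RCLike.re A.trace := by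
  rw [hA.isHermitian.trace_eq_sum_eigenvalues, ← RCLike.ofReal_sum, RCLike.ofReal_re]
  exact Finset.single_le_sum (fun j _ => hA.eigenvalues_nonneg j) (Finset.mem_univ i)

open scoped MatrixOrder in
theorem PosSemidef.one_sub_of_trace_eq_one (hA : A.PosSemidef) (htr : A.trace = 1) :
    (1 - A).PosSemidef := by
  have hle : A ≤ 1 := by
    rw [CFC.le_one_iff (R := ℝ) A, hA.isHermitian.spectrum_real_eq_range_eigenvalues]
    rintro _ ⟨i, rfl⟩
    simpa [htr] using hA.eigenvalues_le_re_trace i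
  exact nonneg_iff_posSemidef.mp (sub_nonneg.mpr hle)

end TraceBound

end Matrix

/-- Tensor McCormick inequalities: for density matrices `Z_A`, `Z_B` and
`Z = Z_A ⊗ Z_B`, the matrices `(I ⊗ Z_B) - Z`, `(Z_A ⊗ I) - Z`, and
`Z - (I ⊗ Z_B) - (Z_A ⊗ I) + I` are positive semidefinite. -/
theorem tensor_mccormick (n m : ℕ)
    (ZA : Matrix (Fin n) (Fin n) ℂ) (ZB : Matrix (Fin m) (Fin m) ℂ)
    (hA : ZA.PosSemidef) (hAtr : ZA.trace = 1)
    (hB : ZB.PosSemidef) (hBtr : ZB.trace = 1) :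
    (((1 : Matrix (Fin n) (Fin n) ℂ) ⊗ₖ ZB) - ZA ⊗ₖ ZB).PosSemidef ∧
    ((ZA ⊗ₖ (1 : Matrix (Fin m) (Fin m) ℂ)) - ZA ⊗ₖ ZB).PosSemidef ∧
    (ZA ⊗ₖ ZB - ((1 : Matrix (Fin n) (Fin n) ℂ) ⊗ₖ ZB)
      - (ZA ⊗ₖ (1 : Matrix (Fin m) (Fin m) ℂ))
      + (1 : Matrix (Fin n × Fin m) (Fin n × Fin m) ℂ)).PosSemidef := by
  have hA' := hA.one_sub_of_trace_eq_one hAtr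
  have hB' := hB.one_sub_of_trace_eq_one hBtr
  refine ⟨?_, ?_, ?_⟩
  · simpa only [sub_kronecker] using hA'.kronecker hB
  · simpa only [kronecker_sub] using hA.kronecker hB'
  · have hfactor : ZA ⊗ₖ ZB - (1 : Matrix (Fin n) (Fin n) ℂ) ⊗ₖ ZB
        - ZA ⊗ₖ (1 : Matrix (Fin m) (Fin m) ℂ) + 1 = (1 - ZA) ⊗ₖ (1 - ZB) := by
      rw [sub_kronecker, kronecker_sub, kronecker_sub, one_kronecker_one]
      abel
    rw [hfactor]
    exact hA'.kronecker hB'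
end
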